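/- arXiv:1711.05028 — 2 statements merged into one kernel-verified Lean document; each statement's English description precedes it below -/
import Mathlib

section
/- Let d, n be positive integers with nd even, and let ν be a symmetric matrix with (nd)ν(i,j) ∈ ℕ, Σ_{i,j} ν(i,j) = 1, and marginals ρ(i) = Σ_j ν(i,j). The number of perfect matchings of nd labelled points, partitioned into groups of sizes ndρ_1,...,ndρ_q, inducing exactly ndν(i,j) matched pairs between groups i and j for i ≠ j and (nd ν(i,i))/2 pairs within group i, equals ∏_{i=1}^q [ (ndρ_i)! / ∏_j (ndν_{ij})! ] · ∏_{i<j} (nd ν_{ij})! · ∏_i (nd ν_{ii} - 1)!!, where counts involving within-group pairs require ndν(i,i) even. -/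
open scoped Classical

open Equiv Finset Nat

/-!
Given a pairing `f`, record the spin `c p = σ (f p)` of each point's partner. The admissible
`c` are the colourings in which the pairs `(σ p, c p)` take each value `(i, j)` exactly
`m (i, j)` times; the permutations preserving `σ` act transitively on them, with stabiliser of
order `∏ (m a)!`, so there are `∏ᵢ multinomial (m (i, ·))` of them. For fixed `c`, the pairing
maps the points labelled `(i, j)` onto those labelled `(j, i)`: for `i < j` by an arbitrary
bijection, `(m i j)!` choices, and for `i = j` by a perfect matching, `(m i i - 1)!!` choices
(the permutations of cycle type `2 ^ k`).
-/

theorem Nat.factorial_two_mul (k : ℕ) : (2 * k)! = 2 ^ k * k ! * (2 * k - 1)‼ := by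
  rcases k with _ | k
  · rfl
  rw [← doubleFactorial_two_mul, show 2 * (k + 1) = 2 * k + 1 + 1 by ring,
    factorial_eq_mul_doubleFactorial, Nat.add_sub_cancel]

namespace Equiv.Perm

theorem cycleType_eq_replicate_two_iff {α : Type*} [Fintype α] [DecidableEq α] {k : ℕ}
    (hk : Fintype.card α = 2 * k) (f : Perm α) :
    f.cycleType = Multiset.replicate k 2 ↔ Function.Involutive f ∧ ∀ x, f x ≠ x := by
  have hinv : Function.Involutive f ↔ ∀ c ∈ f.cycleType, c = 2 := by
    rw [← pow_prime_eq_one_iff, sq, Perm.ext_iff]; rfl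
  have hfree : (∀ x, f x ≠ x) ↔ f.cycleType.sum = 2 * k := by
    rw [sum_cycleType, ← hk, Finset.card_eq_iff_eq_univ]
    simp [Finset.eq_univ_iff_forall]
  rw [hinv, hfree]
  constructor
  · intro h
    simp [h, Multiset.mem_replicate, mul_comm]
  · rintro ⟨h2, hsum⟩
    rw [Multiset.eq_replicate_of_mem h2] at hsum ⊢
    rw [Multiset.sum_replicate, smul_eq_mul] at hsum
    congr 1
    omega

theorem card_involutive_fixedPointFree {α : Type*} [Finite α] (he : Even (Nat.card α)) :
    Nat.card {f : Perm α // Function.Involutive f ∧ ∀ x, f x ≠ x} =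
      (Nat.card α - 1)‼ := by
  cases nonempty_fintype α
  obtain ⟨k, hk⟩ := he
  rw [← two_mul, Nat.card_eq_fintype_card] at hk
  have hcount := card_of_cycleType_mul_eq α (Multiset.replicate k 2)
  have hmult : ∏ n ∈ (Multiset.replicate k 2).toFinset,
      (Multiset.count n (Multiset.replicate k 2))! = k ! := by
    rw [Multiset.toFinset_replicate]
    split_ifs with h <;> simp [h]
  simp_rw [cycleType_eq_replicate_two_iff hk, hk, hmult, Multiset.sum_replicate,
    Multiset.prod_replicate, smul_eq_mul, mul_comm k 2, Nat.sub_self, Multiset.mem_replicate]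
    at hcount
  rw [if_pos (by simp), factorial_two_mul] at hcount
  rw [Nat.card_eq_fintype_card, Fintype.card_subtype, Nat.card_eq_fintype_card, hk]
  simpa [mul_comm, Nat.factorial_ne_zero] using hcount

variable {V κ : Type*}

def fiberwiseEquiv (u : V → κ) : {f : Perm V // u ∘ f = u} ≃ ∀ k, Perm {p // u p = k} :=
  (subtypeEquiv DomMulAct.mk fun _ => DomMulAct.mem_stabilizer_iff.symm).trans
    (MulOpposite.opEquiv.trans (DomMulAct.stabilizerMulEquiv u).toEquiv)

theorem card_involutive_fiberwise [Finite V] [Fintype κ] (u : V → κ) (R : V → V → Prop)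
    (hR : ∀ p p', R p p' → u p' = u p) :
    Nat.card {f : Perm V // Function.Involutive f ∧ ∀ p, R p (f p)} =
      ∏ k, Nat.card {g : Perm {p // u p = k} //
        Function.Involutive g ∧ ∀ x : {p // u p = k}, R x (g x)} := by
  have hiff : ∀ f : {f : Perm V // u ∘ f = u},
      (Function.Involutive f.1 ∧ ∀ p, R p (f.1 p)) ↔
        ∀ k, Function.Involutive (fiberwiseEquiv u f k) ∧
          ∀ x : {p // u p = k}, R x (fiberwiseEquiv u f k x) := by
    intro f
    refine ⟨fun hf k => ⟨fun x => Subtype.ext (hf.1 x), fun x => hf.2 x⟩,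
      fun hf => ⟨fun p => ?_, fun p => (hf (u p)).2 ⟨p, rfl⟩⟩⟩
    exact congrArg Subtype.val ((hf (u p)).1 ⟨p, rfl⟩)
  rw [← Nat.card_pi]
  exact Nat.card_congr <|
    (subtypeSubtypeEquivSubtype fun hf => funext fun p => hR _ _ (hf.2 p)).symm.trans
      ((subtypeEquiv (fiberwiseEquiv u) hiff).trans subtypePiEquivPi)

def involutiveSwapEquiv (s : V → Prop) [DecidablePred s] :
    {f : Perm V // Function.Involutive f ∧ ∀ p, (s (f p) ↔ ¬ s p)} ≃
      ({p // s p} ≃ {p // ¬ s p}) where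
  toFun f :=
    { toFun := fun p => ⟨f.1 p, fun h => (f.2.2 p).1 h p.2⟩
      invFun := fun q => ⟨f.1 q, (f.2.2 q).2 q.2⟩
      left_inv := fun p => Subtype.ext (f.2.1 p)
      right_inv := fun q => Subtype.ext (f.2.1 q) }
  invFun e :=
    let g : V → V := fun p => if h : s p then e ⟨p, h⟩ else e.symm ⟨p, h⟩
    have hg : Function.Involutive g := fun p => by
      by_cases h : s p
      · simp [g, h, (e ⟨p, h⟩).2]
      · simp [g, h, (e.symm ⟨p, h⟩).2]
    ⟨hg.toPerm g, hg, fun p => by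
      by_cases h : s p
      · simp [g, h, (e ⟨p, h⟩).2]
      · simp [g, h, (e.symm ⟨p, h⟩).2]⟩
  left_inv f := by
    ext p
    simp
  right_inv e := by
    ext x
    exact dif_pos x.2

theorem card_involutive_swap [Finite V] (s : V → Prop)
    (hs : Nat.card {p // s p} = Nat.card {p // ¬ s p}) :
    Nat.card {f : Perm V // Function.Involutive f ∧ ∀ p, (s (f p) ↔ ¬ s p)} =
      (Nat.card {p // s p})! := by
  obtain ⟨e⟩ := Finite.card_eq.mp hs
  rw [Nat.card_congr (involutiveSwapEquiv s), ← Nat.card_perm,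
    Nat.card_congr (equivCongr (Equiv.refl _) e)]

end Equiv.Perm

section FiberCard

variable {V γ δ : Type*}

theorem exists_perm_comp_eq [Finite V] {τ₀ τ : V → γ}
    (h : ∀ g, Nat.card {v // τ v = g} = Nat.card {v // τ₀ v = g}) :
    ∃ e : Perm V, τ₀ ∘ e = τ :=
  ⟨ofFiberEquiv fun g => (Finite.card_eq.mp (h g)).some, funext (ofFiberEquiv_map _)⟩

theorem card_perm_comp_eq {τ₀ τ : V → γ} {e : Perm V} (he : τ₀ ∘ e = τ) :
    Nat.card {h : Perm V // τ₀ ∘ h = τ} = Nat.card {h : Perm V // τ₀ ∘ h = τ₀} := by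
  refine Nat.card_congr (subtypeEquiv (Equiv.mulRight e⁻¹) fun h => ?_)
  subst he
  constructor
  · intro hh; funext v; simpa using congrFun hh (e⁻¹ v)
  · intro hh; funext v; simpa using congrFun hh (e v)

theorem card_perm_comp_eq_self [Finite V] [Fintype γ] (τ : V → γ) :
    Nat.card {h : Perm V // τ ∘ h = τ} = ∏ g, (Nat.card {v // τ v = g})! := by
  cases nonempty_fintype V
  simpa only [← Nat.card_eq_fintype_card] using DomMulAct.stabilizer_card τ

-- Orbit–stabiliser for the permutations preserving `π ∘ τ₀`, acting on the `τ` by precomposition.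
theorem card_sameFiberCards_mul_prod_factorial [Finite V] [Fintype γ] [Fintype δ] (π : γ → δ)
    (τ₀ : V → γ) :
    Nat.card {τ : V → γ // π ∘ τ = π ∘ τ₀ ∧
        ∀ g, Nat.card {v // τ v = g} = Nat.card {v // τ₀ v = g}} *
      ∏ g, (Nat.card {v // τ₀ v = g})! = ∏ d, (Nat.card {v // π (τ₀ v) = d})! := by
  set C := {τ : V → γ // π ∘ τ = π ∘ τ₀ ∧
    ∀ g, Nat.card {v // τ v = g} = Nat.card {v // τ₀ v = g}}
  let Φ : {h : Perm V // (π ∘ τ₀) ∘ h = π ∘ τ₀} → C := fun h =>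
    ⟨τ₀ ∘ h.1, h.2, fun g => Nat.card_congr (h.1.subtypeEquiv fun _ => Iff.rfl)⟩
  have hfiber : ∀ τ : C,
      Nat.card {h // Φ h = τ} = Nat.card {h : Perm V // τ₀ ∘ h = τ₀} := by
    intro τ
    obtain ⟨e, he⟩ := exists_perm_comp_eq τ.2.2
    rw [← card_perm_comp_eq he]
    refine Nat.card_congr ((subtypeEquivRight (q := fun h => τ₀ ∘ h.1 = τ.1)
      fun h => Subtype.ext_iff).trans
      (subtypeSubtypeEquivSubtype (q := fun h : Perm V => τ₀ ∘ h = τ.1) fun {h} hh => ?_))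
    rw [Function.comp_assoc, hh, τ.2.1]
  have : Fintype C := Fintype.ofFinite C
  refine Eq.trans ?_ (card_perm_comp_eq_self (π ∘ τ₀))
  rw [← Nat.card_congr (sigmaFiberEquiv Φ), Nat.card_sigma,
    Finset.sum_congr rfl (fun τ _ => hfiber τ), Finset.sum_const, smul_eq_mul,
    Finset.card_univ, ← Nat.card_eq_fintype_card, card_perm_comp_eq_self]

theorem exists_lift_with_fiberCard [Finite V] [Fintype γ] (π : γ → δ) (ψ : V → δ)
    (k : γ → ℕ) (hk : ∀ d, Nat.card {v // ψ v = d} = ∑ g with π g = d, k g) :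
    ∃ τ : V → γ, π ∘ τ = ψ ∧ ∀ g, Nat.card {v // τ v = g} = k g := by
  have hfiber : ∀ d, Nat.card {v // ψ v = d} = Nat.card {w : Σ g, Fin (k g) // π w.1 = d} := by
    intro d
    rw [hk, Nat.card_congr (subtypeSigmaEquiv (fun g => Fin (k g)) fun g => π g = d),
      Nat.card_sigma]
    simp [Finset.sum_subtype _ (fun g => Finset.mem_filter_univ g)]
  let e := fun d => (Finite.card_eq.mp (hfiber d)).some
  let E := ofFiberEquiv e
  refine ⟨fun v => (E v).1, funext (ofFiberEquiv_map e), fun g => ?_⟩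
  rw [Nat.card_congr (E.subtypeEquiv (p := fun v => (E v).1 = g) (q := fun w => w.1 = g)
    fun _ => Iff.rfl), Nat.card_congr (sigmaSubtype g), Nat.card_eq_fintype_card,
    Fintype.card_fin]

end FiberCard

section SwapPairings

variable {W : Type*} [Finite W]

theorem card_pairings_swap_of_diag {α : Type*} (t : W → α × α) {i : α}
    (ht : ∀ w, t w = (i, i)) (he : Even (Nat.card W)) :
    Nat.card {f : Perm W // Function.Involutive f ∧ ∀ w, f w ≠ w ∧ t (f w) = (t w).swap} =
      (Nat.card W - 1)‼ := by
  rw [← Perm.card_involutive_fixedPointFree he]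
  simp [ht]

theorem card_pairings_swap_of_offDiag {α : Type*} (t : W → α × α) {a : α × α}
    (ha : a.1 ≠ a.2) (ht : ∀ w, t w = a ∨ t w = a.swap)
    (hcard : Nat.card {w // t w = a} = Nat.card {w // t w = a.swap}) :
    Nat.card {f : Perm W // Function.Involutive f ∧ ∀ w, f w ≠ w ∧ t (f w) = (t w).swap} =
      (Nat.card {w // t w = a})! := by
  have hiff : ∀ w w', (w' ≠ w ∧ t w' = (t w).swap) ↔ (t w' = a ↔ ¬ t w = a) := by
    intro w w'
    rcases ht w with h | h <;> rcases ht w' with h' | h' <;> grind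
  rw [← Perm.card_involutive_swap (fun w => t w = a)]
  · exact Nat.card_congr (subtypeEquivRight fun f =>
      and_congr_right' (forall_congr' fun w => hiff w (f w)))
  · rw [hcard]
    exact Nat.card_congr (subtypeEquivRight fun w => by rcases ht w with h | h <;> grind)

variable {V α : Type*} [Finite V] [LinearOrder α]

def sortedPair (a : α × α) : α × α := (min a.1 a.2, max a.1 a.2)

theorem sortedPair_swap (a : α × α) : sortedPair a.swap = sortedPair a := by
  simp [sortedPair, min_comm, max_comm]

theorem sortedPair_eq_iff {a k : α × α} (hk : k.1 ≤ k.2) :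
    sortedPair a = k ↔ a = k ∨ a = k.swap := by
  simp only [sortedPair, Prod.ext_iff, Prod.fst_swap, Prod.snd_swap]
  grind

theorem card_pairings_swap_block (t : V → α × α)
    (hsymm : ∀ a, Nat.card {p // t p = a.swap} = Nat.card {p // t p = a})
    (heven : ∀ i, Even (Nat.card {p // t p = (i, i)})) (k : α × α) :
    Nat.card {g : Perm {p // sortedPair (t p) = k} //
      Function.Involutive g ∧ ∀ x, (g x : V) ≠ x ∧ t (g x) = (t x).swap} =
      (if k.1 < k.2 then (Nat.card {p // t p = k})! else 1) *
        if k.1 = k.2 then (Nat.card {p // t p = k} - 1)‼ else 1 := by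
  have hfiber : ∀ a, (∀ p, t p = a → sortedPair (t p) = k) →
      Nat.card {x : {p // sortedPair (t p) = k} // t x = a} = Nat.card {p // t p = a} :=
    fun a h => Nat.card_congr (subtypeSubtypeEquivSubtype (h _))
  rcases lt_trichotomy k.1 k.2 with hlt | heq | hgt
  · have hmem := fun p => sortedPair_eq_iff (a := t p) hlt.le
    rw [if_pos hlt, if_neg hlt.ne, mul_one, ← hfiber k fun p h => (hmem p).2 (.inl h)]
    refine (Nat.card_congr (subtypeEquivRight fun g => ?_)).trans
      (card_pairings_swap_of_offDiag (fun x : {p // sortedPair (t p) = k} => t x) hlt.ne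
        (fun x => (hmem x).1 x.2) ?_)
    · simp only [ne_eq, Subtype.ext_iff]
    · rw [hfiber k fun p h => (hmem p).2 (.inl h), hfiber k.swap fun p h => (hmem p).2 (.inr h),
        hsymm]
  · rw [if_neg heq.not_lt, if_pos heq, one_mul]
    obtain ⟨i, j⟩ := k
    obtain rfl : i = j := heq
    have hdiag : ∀ p, sortedPair (t p) = (i, i) ↔ t p = (i, i) := fun p => by
      rw [sortedPair_eq_iff le_rfl, Prod.swap_prod_mk, or_self]
    have hcard : Nat.card {p // sortedPair (t p) = (i, i)} = Nat.card {p // t p = (i, i)} :=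
      Nat.card_congr (subtypeEquivRight hdiag)
    rw [← hcard]
    refine (Nat.card_congr (subtypeEquivRight fun g => ?_)).trans
      (card_pairings_swap_of_diag (fun x : {p // sortedPair (t p) = (i, i)} => t x)
        (fun x => (hdiag x).1 x.2) (hcard ▸ heven i))
    simp only [ne_eq, Subtype.ext_iff]
  · have : IsEmpty {p // sortedPair (t p) = k} :=
      ⟨fun x => not_le_of_gt hgt (x.2 ▸ min_le_max)⟩
    rw [if_neg (lt_asymm hgt), if_neg (ne_of_gt hgt), mul_one]
    exact Nat.card_eq_one_iff_unique.mpr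
      ⟨inferInstance, ⟨⟨1, fun x => isEmptyElim x, fun x => isEmptyElim x⟩⟩⟩

theorem card_pairings_swap [Fintype α] (t : V → α × α)
    (hsymm : ∀ a, Nat.card {p // t p = a.swap} = Nat.card {p // t p = a})
    (heven : ∀ i, Even (Nat.card {p // t p = (i, i)})) :
    Nat.card {f : Perm V // Function.Involutive f ∧ ∀ p, f p ≠ p ∧ t (f p) = (t p).swap} =
      (∏ a with a.1 < a.2, (Nat.card {p // t p = a})!) *
        ∏ i, (Nat.card {p // t p = (i, i)} - 1)‼ := by
  have hkey : ∀ p p', p' ≠ p ∧ t p' = (t p).swap →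
      sortedPair (t p') = sortedPair (t p) := by
    rintro p p' ⟨-, h⟩
    rw [h, sortedPair_swap]
  rw [Perm.card_involutive_fiberwise (fun p => sortedPair (t p)) _ hkey,
    Finset.prod_congr rfl fun k _ => card_pairings_swap_block t hsymm heven k,
    prod_mul_distrib, prod_ite, prod_const_one, mul_one, Fintype.prod_prod_type]
  simp [Finset.prod_ite_eq]

end SwapPairings

section Configuration

variable {V α : Type*} [Finite V] [Fintype α]

def HasPairCounts (σ c : V → α) (m : α × α → ℕ) : Prop :=
  ∀ i j, Nat.card {p // σ p = i ∧ c p = j} = m (i, j)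

theorem card_hasPairCounts (σ : V → α) (m : α × α → ℕ)
    (hσ : ∀ i, Nat.card {p // σ p = i} = ∑ j, m (i, j)) :
    Nat.card {c // HasPairCounts σ c m} = ∏ i, Nat.multinomial univ fun j => m (i, j) := by
  obtain ⟨τ₀, hτ₀σ, hτ₀⟩ := exists_lift_with_fiberCard Prod.fst σ m fun i => by
    rw [hσ, Finset.sum_filter, Fintype.sum_prod_type, Finset.sum_comm]
    simp
  have hpair : ∀ (τ : V → α × α) (a : α × α),
      Nat.card {p // τ p = a} = Nat.card {p // (τ p).1 = a.1 ∧ (τ p).2 = a.2} :=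
    fun τ a => Nat.card_congr (subtypeEquivRight fun _ => Prod.ext_iff)
  let e : {c // HasPairCounts σ c m} ≃
      {τ : V → α × α // Prod.fst ∘ τ = Prod.fst ∘ τ₀ ∧
        ∀ a, Nat.card {p // τ p = a} = Nat.card {p // τ₀ p = a}} :=
    { toFun := fun c => ⟨fun p => (σ p, c.1 p), hτ₀σ.symm, fun a => by
        rw [hτ₀, hpair]; exact c.2 a.1 a.2⟩
      invFun := fun τ => ⟨fun p => (τ.1 p).2, fun i j => by
        have hfst : ∀ p, (τ.1 p).1 = σ p := congrFun (τ.2.1.trans hτ₀σ)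
        rw [← hτ₀ (i, j), ← τ.2.2, hpair]
        simp only [hfst]⟩
      left_inv := fun c => rfl
      right_inv := fun τ => Subtype.ext (funext fun p =>
        Prod.ext (congrFun (τ.2.1.trans hτ₀σ) p).symm rfl) }
  have hcount : Nat.card {c // HasPairCounts σ c m} * ∏ a, (m a)! =
      ∏ i, (Nat.card {p // σ p = i})! := by
    have h := card_sameFiberCards_mul_prod_factorial Prod.fst τ₀
    rw [← Nat.card_congr e] at h
    simp only [hτ₀] at h
    rw [h, ← hτ₀σ]
    rfl
  simp only [hσ, ← Nat.multinomial_spec, prod_mul_distrib, Fintype.prod_prod_type] at hcount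
  exact Nat.eq_of_mul_eq_mul_right (by positivity) (hcount.trans (mul_comm _ _))

variable [LinearOrder α]

theorem card_pairings_with_partner_spins (σ c : V → α) (m : α × α → ℕ)
    (hsym : ∀ i j, m (i, j) = m (j, i)) (hdiag : ∀ i, Even (m (i, i)))
    (hc : HasPairCounts σ c m) :
    Nat.card {f : Perm V // (Function.Involutive f ∧ (∀ p, f p ≠ p) ∧
        HasPairCounts σ (σ ∘ f) m) ∧ σ ∘ f = c} =
      (∏ a with a.1 < a.2, (m a)!) * ∏ i, (m (i, i) - 1)‼ := by
  have hcount : ∀ a, Nat.card {p // (σ p, c p) = a} = m a := fun a =>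
    (Nat.card_congr (subtypeEquivRight fun _ => Prod.ext_iff)).trans (hc a.1 a.2)
  have key := card_pairings_swap (fun p => (σ p, c p))
    (fun a => by rw [hcount, hcount]; exact hsym _ _) (fun i => by rw [hcount]; exact hdiag i)
  simp only [hcount] at key
  rw [← key]
  refine Nat.card_congr (subtypeEquivRight fun f => ⟨?_, ?_⟩)
  · rintro ⟨⟨hinv, hfree, -⟩, rfl⟩
    exact ⟨hinv, fun p => ⟨hfree p, by simp [hinv p]⟩⟩
  · rintro ⟨hinv, hf⟩
    have hσc : σ ∘ f = c := funext fun p => congrArg Prod.fst (hf p).2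
    exact ⟨⟨hinv, fun p => (hf p).1, hσc ▸ hc⟩, hσc⟩

theorem card_pairings_with_pairCounts (σ : V → α) (m : α × α → ℕ)
    (hsym : ∀ i j, m (i, j) = m (j, i)) (hdiag : ∀ i, Even (m (i, i)))
    (hσ : ∀ i, Nat.card {p // σ p = i} = ∑ j, m (i, j)) :
    Nat.card {f : Perm V // Function.Involutive f ∧ (∀ p, f p ≠ p) ∧
        HasPairCounts σ (σ ∘ f) m} =
      (∏ i, Nat.multinomial univ fun j => m (i, j)) * (∏ a with a.1 < a.2, (m a)!) *
        ∏ i, (m (i, i) - 1)‼ := by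
  let partnerSpins : {f : Perm V // Function.Involutive f ∧ (∀ p, f p ≠ p) ∧
      HasPairCounts σ (σ ∘ f) m} → {c // HasPairCounts σ c m} :=
    fun f => ⟨σ ∘ f.1, f.2.2.2⟩
  have hfiber : ∀ c, Nat.card {f // partnerSpins f = c} =
      (∏ a with a.1 < a.2, (m a)!) * ∏ i, (m (i, i) - 1)‼ := fun c =>
    (Nat.card_congr ((subtypeEquivRight fun f => Subtype.ext_iff).trans
      (subtypeSubtypeEquivSubtypeInter _ (fun f : Perm V => σ ∘ f = c.1)))).trans
      (card_pairings_with_partner_spins σ c.1 m hsym hdiag c.2)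
  have : Fintype {c // HasPairCounts σ c m} := Fintype.ofFinite _
  rw [← Nat.card_congr (sigmaFiberEquiv partnerSpins), Nat.card_sigma,
    Finset.sum_congr rfl fun c _ => hfiber c, Finset.sum_const, smul_eq_mul, Finset.card_univ,
    ← Nat.card_eq_fintype_card, card_hasPairCounts σ m hσ, mul_assoc]

end Configuration

theorem stmt12_general (q n d : ℕ)
    (m : Fin q × Fin q → ℕ) (hsym : ∀ i j, m (i, j) = m (j, i))
    (hdiag : ∀ i, Even (m (i, i)))
    (σ : Fin (n * d) → Fin q)
    (hσ : ∀ i, (Finset.univ.filter fun p => σ p = i).card = ∑ j, m (i, j)) :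
    (Finset.univ.filter (fun f : Equiv.Perm (Fin (n * d)) =>
        (∀ p, f (f p) = p) ∧ (∀ p, f p ≠ p) ∧
        ∀ i j, (Finset.univ.filter fun p => σ p = i ∧ σ (f p) = j).card = m (i, j))).card
      = (∏ i, Nat.multinomial Finset.univ (fun j => m (i, j))) *
        (∏ a ∈ Finset.univ.filter (fun a : Fin q × Fin q => a.1 < a.2),
          Nat.factorial (m a)) *
        (∏ i, Nat.doubleFactorial (m (i, i) - 1)) := by
  have hσ' : ∀ i, Nat.card {p // σ p = i} = ∑ j, m (i, j) := fun i => by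
    rw [Nat.card_eq_fintype_card, Fintype.card_subtype, hσ]
  rw [← card_pairings_with_pairCounts σ m hsym hdiag hσ', Nat.card_eq_fintype_card,
    Fintype.card_subtype]
  simp only [HasPairCounts, Function.comp_apply, Nat.card_eq_fintype_card, Fintype.card_subtype]
  -- the two sides differ only in their `Decidable` instances
  congr!

/-- Enumeration of pairings in the configuration model: the number of fixed-point-free
involutions (perfect matchings) of `nd` labelled points, grouped by spin via `σ`, inducing
exactly `m(i,j)` matched points with spins `(i,j)`, equals
`∏ᵢ (ndρᵢ)!/∏ⱼ (m i j)! · ∏_{i<j} (m i j)! · ∏ᵢ (m i i - 1)!!`. -/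
theorem stmt12 (q n d : ℕ) (hn : 0 < n) (hd : 0 < d) (hnd : Even (n * d))
    (m : Fin q × Fin q → ℕ) (hsym : ∀ i j, m (i, j) = m (j, i))
    (hdiag : ∀ i, Even (m (i, i))) (hsum : ∑ a, m a = n * d)
    (σ : Fin (n * d) → Fin q)
    (hσ : ∀ i, (Finset.univ.filter fun p => σ p = i).card = ∑ j, m (i, j)) :
    (Finset.univ.filter (fun f : Equiv.Perm (Fin (n * d)) =>
        (∀ p, f (f p) = p) ∧ (∀ p, f p ≠ p) ∧
        ∀ i j, (Finset.univ.filter fun p => σ p = i ∧ σ (f p) = j).card = m (i, j))).card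
      = (∏ i, Nat.multinomial Finset.univ (fun j => m (i, j))) *
        (∏ a ∈ Finset.univ.filter (fun a : Fin q × Fin q => a.1 < a.2),
          Nat.factorial (m a)) *
        (∏ i, Nat.doubleFactorial (m (i, i) - 1)) :=
  stmt12_general q n d m hsym hdiag σ hσ
end

section
/- For any fixed probability measures ρ on [q] and symmetric ν on [q]² with marginal ρ and ν ≪ ρ⊗ρ, there exists a sequence of admissible realizable types (ρ_n, ν_n) (with nρ_n and ndν_n integer-valued, ν_n symmetric with marginal ρ_n) such that ρ_n → ρ, ν_n → ν in total variation, and H(ρ_n||μ) + (d/2)H(ν_n||ρ_n⊗ρ_n) → H(ρ||μ) + (d/2)H(ν||ρ⊗ρ). -/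
/-!
Write `A = n d P`, where `P = (1 - ε) ν + ε ρ ⊗ ρ` with `ε = n^{-1/2}`. Round `A` entrywise to a
symmetric integer matrix with even diagonal (floors, with the diagonal rounded to even numbers),
but round up the entries of a column `i₀` with `ρ i₀ > 0` just far enough that every row other than
`i₀` has sum divisible by `d`, and put whatever is left of the total `n d` into the corner
`(i₀, i₀)`. The corner then makes the row `i₀` divisible by `d` and, since `n d` is even, is
even. All rounding errors are `O(1)`, and the corner entry stays nonnegative because
`A (i₀, i₀) ≥ √n d ρ i₀ ^ 2 → ∞`; this is why `ν` is mixed with `ρ ⊗ ρ`, as `ν (i₀, i₀)` may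
vanish. Rows and columns where `ρ` vanishes stay zero, so the rate converges by continuity of
`x log (x / y)` at `y ≠ 0` and of `x log x` at `0`.
-/

open Filter Topology Finset

def padToDvd (d s : ℕ) : ℕ := (d - s % d) % d

lemma dvd_add_padToDvd {d : ℕ} (hd : 0 < d) (s : ℕ) : d ∣ s + padToDvd d s := by
  rw [Nat.dvd_iff_mod_eq_zero, padToDvd]
  rcases Nat.eq_zero_or_pos (s % d) with h | h
  · simp [h]
  · rw [Nat.mod_eq_of_lt (Nat.sub_lt hd h), Nat.add_mod, Nat.mod_eq_of_lt (Nat.sub_lt hd h),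
      Nat.add_sub_cancel' (Nat.mod_lt s hd).le, Nat.mod_self]

lemma padToDvd_lt {d : ℕ} (hd : 0 < d) (s : ℕ) : padToDvd d s < d := Nat.mod_lt _ hd

lemma padToDvd_zero (d : ℕ) : padToDvd d 0 = 0 := by simp [padToDvd]

lemma even_sum_of_symm {ι : Type*} [Fintype ι] (f : ι × ι → ℕ)
    (hsymm : ∀ i j, f (i, j) = f (j, i)) (hdiag : ∀ i, Even (f (i, i))) :
    Even (∑ a, f a) := by
  rw [← ZMod.natCast_eq_zero_iff_even, Nat.cast_sum]
  refine sum_ninvolution Prod.swap (fun a => ?_) (fun a ha hswap => ?_) (fun _ => mem_univ _)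
    Prod.swap_swap
  · rw [Prod.swap, hsymm, ← two_mul]
    exact zero_mul _
  · obtain ⟨i, j⟩ := a
    obtain rfl : j = i := congrArg Prod.fst hswap
    exact ha ((ZMod.natCast_eq_zero_iff_even).2 (hdiag j))

lemma tendsto_div_of_abs_sub_mul_le {α : Type*} {l : Filter α} {f g D : α → ℝ} {b C : ℝ}
    (hD : Tendsto D l atTop) (hg : Tendsto g l (𝓝 b)) (h : ∀ᶠ x in l, |f x - D x * g x| ≤ C) :
    Tendsto (fun x => f x / D x) l (𝓝 b) := by
  have hsmall : Tendsto (fun x => (f x - D x * g x) / D x) l (𝓝 0) := by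
    refine squeeze_zero_norm' ?_ (by simpa using hD.inv_tendsto_atTop.const_mul C)
    filter_upwards [h, hD.eventually_gt_atTop 0] with x hx hpos
    rw [Real.norm_eq_abs, abs_div, abs_of_pos hpos, div_eq_mul_inv]
    exact mul_le_mul_of_nonneg_right hx (inv_nonneg.2 hpos.le)
  have hsum := hg.add hsmall
  rw [add_zero] at hsum
  refine hsum.congr' ?_
  filter_upwards [hD.eventually_gt_atTop 0] with x hpos
  field_simp
  ring

lemma mul_log_div_eq_sub {u v : ℝ} (hv : v ≠ 0) :
    u * Real.log (u / v) = u * Real.log u - u * Real.log v := by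
  rcases eq_or_ne u 0 with rfl | hu
  · simp
  · rw [Real.log_div hu hv, mul_sub]

lemma tendsto_mul_log_div {α : Type*} {l : Filter α} {x y : α → ℝ} {a b : ℝ}
    (hx : Tendsto x l (𝓝 a)) (hy : Tendsto y l (𝓝 b)) (hb : b ≠ 0) :
    Tendsto (fun t => x t * Real.log (x t / y t)) l (𝓝 (a * Real.log (a / b))) := by
  rw [mul_log_div_eq_sub hb]
  refine (((Real.continuous_mul_log.tendsto a).comp hx).sub
    (hx.mul ((Real.continuousAt_log hb).tendsto.comp hy))).congr' ?_
  filter_upwards [hy.eventually_ne hb] with t ht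
  exact (mul_log_div_eq_sub ht).symm

section EdgeCount

variable {ι : Type*} [Fintype ι]

/-- `m (i, j)` counts the ordered pairs of adjacent vertices with colours `i` and `j` in a
`d`-regular graph with `N / d` vertices, so that an edge inside colour class `i` is counted twice
in `m (i, i)`. -/
def IsEdgeCountMatrix (d N : ℕ) (m : ι × ι → ℕ) : Prop :=
  (∀ i j, m (i, j) = m (j, i)) ∧ (∀ i, Even (m (i, i))) ∧ (∀ i, d ∣ ∑ j, m (i, j)) ∧
    ∑ a, m a = N

def IsRealizableType (n d : ℕ) (k : ι → ℕ) (m : ι × ι → ℕ) : Prop :=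
  (∑ i, k i = n) ∧ (∀ i j, m (i, j) = m (j, i)) ∧ (∀ i, Even (m (i, i))) ∧
    ∀ i, ∑ j, m (i, j) = d * k i

lemma IsEdgeCountMatrix.isRealizableType {n d : ℕ} {m : ι × ι → ℕ} (hd : 0 < d)
    (h : IsEdgeCountMatrix d (n * d) m) :
    IsRealizableType n d (fun i => (∑ j, m (i, j)) / d) m := by
  obtain ⟨hsymm, hdiag, hdvd, htotal⟩ := h
  have hrow : ∀ i, ∑ j, m (i, j) = d * ((∑ j, m (i, j)) / d) := fun i =>
    (Nat.mul_div_cancel' (hdvd i)).symm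
  refine ⟨Nat.eq_of_mul_eq_mul_left hd ?_, hsymm, hdiag, hrow⟩
  rw [mul_sum, ← sum_congr rfl fun i _ => hrow i, ← Fintype.sum_prod_type, htotal, mul_comm]

variable [DecidableEq ι]

lemma isEdgeCountMatrix_single {d N : ℕ} (hN : Even N) (hdN : d ∣ N) (i : ι) :
    IsEdgeCountMatrix d N (Pi.single (i, i) N) := by
  refine ⟨fun j k => ?_, fun j => ?_, fun j => ?_, by simp⟩
  · simp only [Pi.single_apply, Prod.mk.injEq, and_comm]
  · by_cases h : j = i <;> simp [h, hN]
  · by_cases h : j = i <;> simp [Pi.single_apply, h, hdN]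

lemma dvd_rowSum_of_forall_ne {d : ℕ} {m : ι × ι → ℕ} (i₀ : ι) (htotal : d ∣ ∑ a, m a)
    (hrow : ∀ i ≠ i₀, d ∣ ∑ j, m (i, j)) : d ∣ ∑ j, m (i₀, j) := by
  rw [Fintype.sum_prod_type, ← add_sum_erase _ _ (mem_univ i₀)] at htotal
  exact (Nat.dvd_add_left (dvd_sum fun i hi => hrow i (ne_of_mem_erase hi))).1 htotal

lemma isEdgeCountMatrix_update_corner {d N : ℕ} {R : ι × ι → ℕ} {i₀ : ι} (hN : Even N)
    (hdN : d ∣ N) (hsymm : ∀ i j, R (i, j) = R (j, i)) (hdiag : ∀ i, Even (R (i, i)))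
    (hcorner : R (i₀, i₀) = 0) (hrow : ∀ i ≠ i₀, d ∣ ∑ j, R (i, j)) (hle : ∑ a, R a ≤ N) :
    IsEdgeCountMatrix d N (Function.update R (i₀, i₀) (N - ∑ a, R a)) := by
  set m := Function.update R (i₀, i₀) (N - ∑ a, R a)
  have hmc : m (i₀, i₀) = N - ∑ a, R a := Function.update_self _ _ _
  have hm_ne : ∀ a ≠ (i₀, i₀), m a = R a := fun a ha => Function.update_of_ne ha _ _
  have hrow_ne : ∀ i ≠ i₀, ∀ j, m (i, j) = R (i, j) := fun i hi j =>
    hm_ne _ fun h => hi (congrArg Prod.fst h)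
  have hcol_ne : ∀ j ≠ i₀, ∀ i, m (i, j) = R (i, j) := fun j hj i =>
    hm_ne _ fun h => hj (congrArg Prod.snd h)
  have htotal : ∑ a, m a = N := by
    rw [← add_sum_erase _ _ (mem_univ (i₀, i₀)),
      sum_congr rfl fun a ha => hm_ne a (ne_of_mem_erase ha), sum_erase _ hcorner, hmc]
    omega
  refine ⟨fun i j => ?_, fun i => ?_, fun i => ?_, htotal⟩
  · by_cases hi : i = i₀
    · by_cases hj : j = i₀
      · rw [hi, hj]
      · rw [hrow_ne j hj, hcol_ne j hj, hsymm]
    · rw [hrow_ne i hi, hcol_ne i hi, hsymm]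
  · by_cases hi : i = i₀
    · rw [hi, hmc, Nat.even_sub hle]
      exact iff_of_true hN (even_sum_of_symm R hsymm hdiag)
    · rw [hrow_ne i hi]
      exact hdiag i
  · have hrow_m : ∀ i ≠ i₀, d ∣ ∑ j, m (i, j) := fun i hi =>
      (sum_congr rfl fun j _ => hrow_ne i hi j) ▸ hrow i hi
    by_cases hi : i = i₀
    · exact hi ▸ dvd_rowSum_of_forall_ne i₀ (htotal ▸ hdN) hrow_m
    · exact hrow_m i hi

end EdgeCount

section Rounding

variable {ι : Type*} [DecidableEq ι]

noncomputable def evenFloor (A : ι × ι → ℝ) (a : ι × ι) : ℕ :=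
  if a.1 = a.2 then 2 * ⌊A a / 2⌋₊ else ⌊A a⌋₊

lemma evenFloor_le {A : ι × ι → ℝ} (hA : ∀ a, 0 ≤ A a) (a : ι × ι) :
    (evenFloor A a : ℝ) ≤ A a := by
  unfold evenFloor
  split_ifs
  · push_cast
    linarith [Nat.floor_le (div_nonneg (hA a) zero_le_two)]
  · exact Nat.floor_le (hA a)

lemma sub_two_lt_evenFloor (A : ι × ι → ℝ) (a : ι × ι) : A a - 2 < evenFloor A a := by
  unfold evenFloor
  split_ifs
  · push_cast
    linarith [Nat.lt_floor_add_one (A a / 2)]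
  · linarith [Nat.lt_floor_add_one (A a)]

variable [Fintype ι]

noncomputable def padEntry (d : ℕ) (A : ι × ι → ℝ) (i₀ i : ι) : ℕ :=
  ⌈A (i, i₀)⌉₊ + padToDvd d (∑ j ∈ univ.erase i₀, evenFloor A (i, j) + ⌈A (i, i₀)⌉₊)

/-- The rounding of `A` with column and row `i₀` rounded up to make the other rows divisible
by `d`, and with the corner `(i₀, i₀)` left empty. -/
noncomputable def roundOffCorner (d : ℕ) (A : ι × ι → ℝ) (i₀ : ι) (a : ι × ι) : ℕ :=
  if a.1 = i₀ then (if a.2 = i₀ then 0 else padEntry d A i₀ a.2)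
  else if a.2 = i₀ then padEntry d A i₀ a.1 else evenFloor A a

lemma le_padEntry (d : ℕ) (A : ι × ι → ℝ) (i₀ i : ι) : A (i, i₀) ≤ padEntry d A i₀ i := by
  unfold padEntry
  push_cast
  linarith [Nat.le_ceil (A (i, i₀)), Nat.cast_nonneg (α := ℝ) (padToDvd d
    (∑ j ∈ univ.erase i₀, evenFloor A (i, j) + ⌈A (i, i₀)⌉₊))]

lemma padEntry_lt {d : ℕ} {A : ι × ι → ℝ} (hd : 0 < d) (hA : ∀ a, 0 ≤ A a) (i₀ i : ι) :
    (padEntry d A i₀ i : ℝ) < A (i, i₀) + d + 1 := by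
  unfold padEntry
  have hpad := padToDvd_lt hd (∑ j ∈ univ.erase i₀, evenFloor A (i, j) + ⌈A (i, i₀)⌉₊)
  push_cast
  linarith [Nat.ceil_lt_add_one (hA (i, i₀)), (Nat.cast_lt (α := ℝ)).2 hpad]

variable {d : ℕ} {A : ι × ι → ℝ} {i₀ : ι}

lemma roundOffCorner_symm (hA : ∀ i j, A (i, j) = A (j, i)) (i j : ι) :
    roundOffCorner d A i₀ (i, j) = roundOffCorner d A i₀ (j, i) := by
  unfold roundOffCorner evenFloor
  by_cases hi : i = i₀ <;> by_cases hj : j = i₀ <;> by_cases hij : i = j <;>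
    simp [hi, hj, hij, hA i j, eq_comm]

lemma even_roundOffCorner_diag (i : ι) : Even (roundOffCorner d A i₀ (i, i)) := by
  by_cases hi : i = i₀ <;> simp [roundOffCorner, evenFloor, hi]

lemma dvd_rowSum_roundOffCorner (hd : 0 < d) {i : ι} (hi : i ≠ i₀) :
    d ∣ ∑ j, roundOffCorner d A i₀ (i, j) := by
  rw [← add_sum_erase _ _ (mem_univ i₀)]
  have hrest : ∑ j ∈ univ.erase i₀, roundOffCorner d A i₀ (i, j) =
      ∑ j ∈ univ.erase i₀, evenFloor A (i, j) :=
    sum_congr rfl fun j hj => by simp [roundOffCorner, hi, ne_of_mem_erase hj]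
  rw [hrest]
  simp only [roundOffCorner, if_neg hi, if_true, padEntry]
  convert dvd_add_padToDvd hd (∑ j ∈ univ.erase i₀, evenFloor A (i, j) + ⌈A (i, i₀)⌉₊) using 1
  ring

lemma abs_roundOffCorner_sub_le (hd : 0 < d) (hA0 : ∀ a, 0 ≤ A a)
    (hA : ∀ i j, A (i, j) = A (j, i)) {a : ι × ι} (ha : a ≠ (i₀, i₀)) :
    |(roundOffCorner d A i₀ a : ℝ) - A a| ≤ d + 1 := by
  obtain ⟨i, j⟩ := a
  have hd1 : (1 : ℝ) ≤ d := Nat.one_le_cast.2 hd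
  rw [abs_le]
  by_cases hi : i = i₀ <;> by_cases hj : j = i₀
  · simp_all
  · simp only [roundOffCorner, hi, hj, ↓reduceIte]
    rw [hA]
    constructor <;> linarith [le_padEntry d A i₀ j, padEntry_lt hd hA0 i₀ j]
  · simp only [roundOffCorner, hi, hj, ↓reduceIte]
    constructor <;> linarith [le_padEntry d A i₀ i, padEntry_lt hd hA0 i₀ i]
  · simp only [roundOffCorner, hi, hj, ↓reduceIte]
    constructor <;> linarith [evenFloor_le hA0 (i, j), sub_two_lt_evenFloor A (i, j)]

lemma roundOffCorner_row_eq_zero {i : ι} (hi : i ≠ i₀) (hA : ∀ j, A (i, j) = 0) (j : ι) :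
    roundOffCorner d A i₀ (i, j) = 0 := by
  have hfloor : ∀ j, evenFloor A (i, j) = 0 := fun j => by simp [evenFloor, hA j]
  simp only [roundOffCorner, if_neg hi]
  split_ifs
  · simp [padEntry, hfloor, hA, padToDvd_zero]
  · exact hfloor j

theorem exists_isEdgeCountMatrix_near (hd : 0 < d) {N : ℕ} (hN : Even N) (hdN : d ∣ N)
    (hA0 : ∀ a, 0 ≤ A a) (hA : ∀ i j, A (i, j) = A (j, i)) (hsum : ∑ a, A a = N)
    (hcorner : Fintype.card (ι × ι) * ((d : ℝ) + 1) ≤ A (i₀, i₀)) :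
    ∃ m : ι × ι → ℕ, IsEdgeCountMatrix d N m ∧
      (∀ a, |(m a : ℝ) - A a| ≤ Fintype.card (ι × ι) * ((d : ℝ) + 1)) ∧
      ∀ i, (∀ j, A (i, j) = 0) → ∀ j, m (i, j) = 0 := by
  set R := roundOffCorner d A i₀
  set c := (i₀, i₀)
  set B : ℝ := d + 1
  have hB : 0 ≤ B := by positivity
  have hcard : (1 : ℝ) ≤ Fintype.card (ι × ι) := Nat.one_le_cast.2 (Fintype.card_pos_iff.2 ⟨c⟩)
  have hR : ∀ a ≠ c, |(R a : ℝ) - A a| ≤ B := fun a ha => abs_roundOffCorner_sub_le hd hA0 hA ha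
  have hRc : R c = 0 := by simp [R, c, roundOffCorner]
  have hdeficit : (N : ℝ) - ∑ a, (R a : ℝ) = A c - ∑ a ∈ univ.erase c, ((R a : ℝ) - A a) := by
    rw [sum_sub_distrib, sum_erase _ (by simp [hRc]), ← hsum, ← add_sum_erase _ _ (mem_univ c)]
    ring
  have herror : |∑ a ∈ univ.erase c, ((R a : ℝ) - A a)| ≤ Fintype.card (ι × ι) * B := by
    calc _ ≤ ∑ a ∈ univ.erase c, |(R a : ℝ) - A a| := abs_sum_le_sum_abs _ _
      _ ≤ #(univ.erase c) * B :=
          (sum_le_card_nsmul _ _ B fun a ha => hR a (ne_of_mem_erase ha)).trans_eq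
            (nsmul_eq_mul _ _)
      _ ≤ _ := by gcongr; exact_mod_cast card_le_univ _
  have hle : ∑ a, R a ≤ N := by
    have : (∑ a, R a : ℝ) ≤ N := by linarith [(abs_le.1 herror).2]
    exact_mod_cast this
  refine ⟨Function.update R c (N - ∑ a, R a),
    isEdgeCountMatrix_update_corner hN hdN (roundOffCorner_symm hA) (fun _ =>
      even_roundOffCorner_diag _) hRc (fun _ hi => dvd_rowSum_roundOffCorner hd hi) hle,
    fun a => ?_, fun i hi j => ?_⟩
  · by_cases ha : a = c
    · rw [ha, Function.update_self, Nat.cast_sub hle, Nat.cast_sum, hdeficit,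
        sub_sub_cancel_left, abs_neg]
      exact herror
    · rw [Function.update_of_ne ha]
      exact (hR a ha).trans (le_mul_of_one_le_left hB hcard)
  · have hi₀ : i ≠ i₀ := by
      rintro rfl
      exact (lt_of_lt_of_le (by positivity) hcorner).ne' (hi i)
    rw [Function.update_of_ne fun h => hi₀ (congrArg Prod.fst h)]
    exact roundOffCorner_row_eq_zero hi₀ hi j

end Rounding

section Mixture

variable {ι : Type*}

def mixWithProduct (ε : ℝ) (ν : ι × ι → ℝ) (ρ : ι → ℝ) (a : ι × ι) : ℝ :=
  (1 - ε) * ν a + ε * (ρ a.1 * ρ a.2)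

variable {ε : ℝ} {ν : ι × ι → ℝ} {ρ : ι → ℝ}

lemma mixWithProduct_nonneg (hε0 : 0 ≤ ε) (hε1 : ε ≤ 1) (hν0 : ∀ a, 0 ≤ ν a)
    (hρ0 : ∀ i, 0 ≤ ρ i) (a : ι × ι) : 0 ≤ mixWithProduct ε ν ρ a :=
  add_nonneg (mul_nonneg (sub_nonneg.2 hε1) (hν0 a)) (mul_nonneg hε0 (mul_nonneg (hρ0 _) (hρ0 _)))

lemma mixWithProduct_symm (hsym : ∀ i j, ν (i, j) = ν (j, i)) (i j : ι) :
    mixWithProduct ε ν ρ (i, j) = mixWithProduct ε ν ρ (j, i) := by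
  simp only [mixWithProduct, hsym i j, mul_comm (ρ i)]

lemma sum_mixWithProduct [Fintype ι] (hν1 : ∑ a, ν a = 1) (hρ1 : ∑ i, ρ i = 1) :
    ∑ a, mixWithProduct ε ν ρ a = 1 := by
  rw [Fintype.sum_prod_type] at hν1
  simp only [mixWithProduct, Fintype.sum_prod_type, sum_add_distrib, ← mul_sum, hν1, hρ1]
  simp only [mul_one, hρ1]
  ring

lemma mixWithProduct_eq_zero_of_left (habs : ∀ i j, ρ i * ρ j = 0 → ν (i, j) = 0) {i : ι}
    (hi : ρ i = 0) (j : ι) : mixWithProduct ε ν ρ (i, j) = 0 := by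
  simp [mixWithProduct, hi, habs i j (by simp [hi])]

lemma mul_sq_le_mixWithProduct (hε1 : ε ≤ 1) (hν0 : ∀ a, 0 ≤ ν a) (i : ι) :
    ε * ρ i ^ 2 ≤ mixWithProduct ε ν ρ (i, i) := by
  have := mul_nonneg (sub_nonneg.2 hε1) (hν0 (i, i))
  simp only [mixWithProduct]
  nlinarith

lemma tendsto_mixWithProduct {α : Type*} {l : Filter α} {ε : α → ℝ} (hε : Tendsto ε l (𝓝 0))
    (a : ι × ι) : Tendsto (fun x => mixWithProduct (ε x) ν ρ a) l (𝓝 (ν a)) := by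
  have h := (((tendsto_const_nhds (x := (1 : ℝ))).sub hε).mul
    (tendsto_const_nhds (x := ν a))).add (hε.mul (tendsto_const_nhds (x := ρ a.1 * ρ a.2)))
  rwa [sub_zero, one_mul, zero_mul, add_zero] at h

end Mixture

lemma inv_sqrt_natCast_le_one (n : ℕ) : (√n)⁻¹ ≤ 1 := by
  rcases n.eq_zero_or_pos with rfl | hn
  · simp
  · exact inv_le_one_of_one_le₀ (Real.one_le_sqrt.2 (Nat.one_le_cast.2 hn))

lemma tendsto_inv_sqrt_natCast : Tendsto (fun n : ℕ => (√n)⁻¹) atTop (𝓝 0) :=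
  tendsto_inv_atTop_zero.comp (Real.tendsto_sqrt_atTop.comp tendsto_natCast_atTop_atTop)

lemma eventually_le_mul_mixWithProduct_diag {ι : Type*} {ν : ι × ι → ℝ} {ρ : ι → ℝ} {d : ℕ}
    (hd : 0 < d) (hν0 : ∀ a, 0 ≤ ν a) {i : ι} (hi : 0 < ρ i) (C : ℝ) :
    ∀ᶠ n : ℕ in atTop, C ≤ n * d * mixWithProduct (√n)⁻¹ ν ρ (i, i) := by
  have hgrow : Tendsto (fun n : ℕ => √n * (d * ρ i ^ 2)) atTop atTop :=
    (Real.tendsto_sqrt_atTop.comp tendsto_natCast_atTop_atTop).atTop_mul_const (by positivity)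
  filter_upwards [hgrow.eventually_ge_atTop C] with n hn
  calc C ≤ √n * (d * ρ i ^ 2) := hn
    _ = (n * (√n)⁻¹) * (d * ρ i ^ 2) := by rw [← div_eq_mul_inv, Real.div_sqrt]
    _ = n * d * ((√n)⁻¹ * ρ i ^ 2) := by ring
    _ ≤ n * d * mixWithProduct (√n)⁻¹ ν ρ (i, i) :=
        mul_le_mul_of_nonneg_left (mul_sq_le_mixWithProduct (inv_sqrt_natCast_le_one n) hν0 i)
          (by positivity)

section Approximation

variable {ι : Type*} [Fintype ι] [DecidableEq ι]

theorem exists_isEdgeCountMatrix_tendsto {d : ℕ} (hd : 0 < d) (ρ : ι → ℝ) (ν : ι × ι → ℝ)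
    (hρ0 : ∀ i, 0 ≤ ρ i) (hρ1 : ∑ i, ρ i = 1) (hν0 : ∀ a, 0 ≤ ν a) (hν1 : ∑ a, ν a = 1)
    (hsym : ∀ i j, ν (i, j) = ν (j, i)) (habs : ∀ i j, ρ i * ρ j = 0 → ν (i, j) = 0) :
    ∃ m : ℕ → ι × ι → ℕ, (∀ n, Even (n * d) → IsEdgeCountMatrix d (n * d) (m n)) ∧
      (∀ a, Tendsto (fun n => (m n a : ℝ) / (n * d)) (atTop ⊓ 𝓟 {n | Even (n * d)})
        (𝓝 (ν a))) ∧
      ∀ i, ρ i = 0 → ∀ᶠ n in atTop ⊓ 𝓟 {n | Even (n * d)}, ∀ j, m n (i, j) = 0 := by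
  obtain ⟨i₀, -, hi₀⟩ : ∃ i ∈ univ, 0 < ρ i := exists_lt_of_sum_lt (by simp [hρ1])
  set P : ℕ → ι × ι → ℝ := fun n => mixWithProduct (√n)⁻¹ ν ρ
  set C : ℝ := Fintype.card (ι × ι) * ((d : ℝ) + 1)
  have hcorner : ∀ᶠ n in atTop, C ≤ n * d * P n (i₀, i₀) :=
    eventually_le_mul_mixWithProduct_diag hd hν0 hi₀ C
  have hchoice : ∀ n, ∃ m : ι × ι → ℕ, Even (n * d) → IsEdgeCountMatrix d (n * d) m ∧
      (C ≤ n * d * P n (i₀, i₀) → (∀ a, |(m a : ℝ) - n * d * P n a| ≤ C) ∧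
        ∀ i, ρ i = 0 → ∀ j, m (i, j) = 0) := by
    intro n
    by_cases h : Even (n * d) ∧ C ≤ n * d * P n (i₀, i₀)
    · obtain ⟨m, hm, hclose, hzero⟩ := exists_isEdgeCountMatrix_near hd h.1 (dvd_mul_left d n)
        (fun a => mul_nonneg (by positivity)
          (mixWithProduct_nonneg (by positivity) (inv_sqrt_natCast_le_one n) hν0 hρ0 a))
        (fun i j => by rw [mixWithProduct_symm hsym])
        (by rw [← mul_sum, sum_mixWithProduct hν1 hρ1]; push_cast; ring) h.2
      exact ⟨m, fun _ => ⟨hm, fun _ => ⟨hclose, fun i hi => hzero i fun j => by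
        rw [mixWithProduct_eq_zero_of_left habs hi, mul_zero]⟩⟩⟩
    · exact ⟨Pi.single (i₀, i₀) (n * d), fun he =>
        ⟨isEdgeCountMatrix_single he (dvd_mul_left d n) i₀, fun hC => absurd ⟨he, hC⟩ h⟩⟩
  choose m hm using hchoice
  have hev : ∀ᶠ n in atTop ⊓ 𝓟 {n | Even (n * d)}, Even (n * d) ∧ C ≤ n * d * P n (i₀, i₀) :=
    eventually_inf_principal.2 (hcorner.mono fun n hn he => ⟨he, hn⟩)
  refine ⟨m, fun n he => (hm n he).1, fun a => ?_, fun i hi => ?_⟩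
  · exact tendsto_div_of_abs_sub_mul_le
      ((tendsto_natCast_atTop_atTop.atTop_mul_const (by positivity)).mono_left inf_le_left)
      ((tendsto_mixWithProduct tendsto_inv_sqrt_natCast a).mono_left inf_le_left)
      (hev.mono fun n hn => ((hm n hn.1).2 hn.2).1 a)
  · exact hev.mono fun n hn => ((hm n hn.1).2 hn.2).2 i hi

theorem exists_realizableType_tendsto {d : ℕ} (hd : 0 < d) (ρ : ι → ℝ) (ν : ι × ι → ℝ)
    (hρ0 : ∀ i, 0 ≤ ρ i) (hρ1 : ∑ i, ρ i = 1) (hν0 : ∀ a, 0 ≤ ν a) (hν1 : ∑ a, ν a = 1)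
    (hsym : ∀ i j, ν (i, j) = ν (j, i)) (hmarg : ∀ i, ∑ j, ν (i, j) = ρ i)
    (habs : ∀ i j, ρ i * ρ j = 0 → ν (i, j) = 0) :
    ∃ k : ℕ → ι → ℕ, ∃ m : ℕ → ι × ι → ℕ,
      (∀ n, Even (n * d) → IsRealizableType n d (k n) (m n)) ∧
      (∀ i, Tendsto (fun n => (k n i : ℝ) / n) (atTop ⊓ 𝓟 {n | Even (n * d)}) (𝓝 (ρ i))) ∧
      (∀ a, Tendsto (fun n => (m n a : ℝ) / (n * d)) (atTop ⊓ 𝓟 {n | Even (n * d)})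
        (𝓝 (ν a))) ∧
      ∀ i j, ρ i * ρ j = 0 → ∀ᶠ n in atTop ⊓ 𝓟 {n | Even (n * d)}, m n (i, j) = 0 := by
  obtain ⟨m, hm, hlim, hzero⟩ :=
    exists_isEdgeCountMatrix_tendsto hd ρ ν hρ0 hρ1 hν0 hν1 hsym habs
  have hreal : ∀ n, Even (n * d) → IsRealizableType n d (fun i => (∑ j, m n (i, j)) / d) (m n) :=
    fun n he => (hm n he).isRealizableType hd
  have heven : ∀ᶠ n in atTop ⊓ 𝓟 {n | Even (n * d)}, Even (n * d) :=
    eventually_inf_principal.2 (Eventually.of_forall fun _ he => he)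
  refine ⟨fun n i => (∑ j, m n (i, j)) / d, m, hreal, fun i => ?_, hlim, fun i j hij => ?_⟩
  · have hrow := tendsto_finsetSum univ fun j _ => hlim (i, j)
    rw [hmarg] at hrow
    refine hrow.congr' (heven.mono fun n he => ?_)
    have hd' : (d : ℝ) ≠ 0 := by positivity
    rw [← sum_div, ← Nat.cast_sum, (hreal n he).2.2.2 i, Nat.cast_mul, mul_comm (n : ℝ),
      mul_div_mul_left _ _ hd']
  · rcases mul_eq_zero.1 hij with hi | hj
    · exact (hzero i hi).mono fun n hn => hn j
    · filter_upwards [hzero j hj, heven] with n hn he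
      rw [(hm n he).1]
      exact hn i

end Approximation

theorem stmt17_general {q : ℕ} (μ : Fin q → ℝ) (hμ0 : ∀ i, 0 < μ i)
    (d : ℕ) (hd : 1 ≤ d)
    (ρ : Fin q → ℝ) (ν : Fin q × Fin q → ℝ)
    (hρ0 : ∀ i, 0 ≤ ρ i) (hρ1 : ∑ i, ρ i = 1)
    (hν0 : ∀ a, 0 ≤ ν a) (hν1 : ∑ a, ν a = 1)
    (hsym : ∀ i j, ν (i, j) = ν (j, i)) (hmarg : ∀ i, ∑ j, ν (i, j) = ρ i)
    (habs : ∀ i j, ρ i * ρ j = 0 → ν (i, j) = 0) :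
    ∃ k : ℕ → Fin q → ℕ, ∃ m : ℕ → Fin q × Fin q → ℕ,
      (∀ n, Even (n * d) → 0 < n →
        (∑ i, k n i = n) ∧ (∀ i j, m n (i, j) = m n (j, i)) ∧ (∀ i, Even (m n (i, i))) ∧
        (∀ i, ∑ j, m n (i, j) = d * k n i)) ∧
      (∀ i, Tendsto (fun n => (k n i : ℝ) / n)
        (atTop ⊓ Filter.principal {n : ℕ | Even (n * d)}) (nhds (ρ i))) ∧
      (∀ a, Tendsto (fun n => (m n a : ℝ) / (n * d))
        (atTop ⊓ Filter.principal {n : ℕ | Even (n * d)}) (nhds (ν a))) ∧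
      Tendsto (fun n =>
          (∑ i, ((k n i : ℝ) / n) * Real.log (((k n i : ℝ) / n) / μ i)) +
            (d : ℝ) / 2 * ∑ i, ∑ j, ((m n (i, j) : ℝ) / (n * d)) *
              Real.log (((m n (i, j) : ℝ) / (n * d)) /
                (((k n i : ℝ) / n) * ((k n j : ℝ) / n))))
        (atTop ⊓ Filter.principal {n : ℕ | Even (n * d)})
        (nhds ((∑ i, ρ i * Real.log (ρ i / μ i)) +
          (d : ℝ) / 2 * ∑ i, ∑ j, ν (i, j) * Real.log (ν (i, j) / (ρ i * ρ j)))) := by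
  obtain ⟨k, m, hreal, hk, hm, hzero⟩ :=
    exists_realizableType_tendsto hd ρ ν hρ0 hρ1 hν0 hν1 hsym hmarg habs
  refine ⟨k, m, fun n he _ => hreal n he, hk, hm, ?_⟩
  refine (tendsto_finsetSum _ fun i _ =>
    tendsto_mul_log_div (hk i) tendsto_const_nhds (hμ0 i).ne').add
      ((tendsto_finsetSum _ fun i _ => tendsto_finsetSum _ fun j _ => ?_).const_mul _)
  by_cases hij : ρ i * ρ j = 0
  · rw [habs i j hij, zero_mul]
    exact tendsto_const_nhds.congr' ((hzero i j hij).mono fun n hn => by simp [hn])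
  · exact tendsto_mul_log_div (hm (i, j)) ((hk i).mul (hk j)) hij

/-- Denseness of types: any admissible pair `(ρ, ν)` with `ν ≪ ρ⊗ρ` is the limit of
realizable admissible types `(ρₙ, νₙ)` (with `n ρₙ` and `nd νₙ` integer valued), with
convergence of the rate, along integers `n` with `nd` even. -/
theorem stmt17 {q : ℕ} (μ : Fin q → ℝ) (hμ0 : ∀ i, 0 < μ i) (hμ1 : ∑ i, μ i = 1)
    (d : ℕ) (hd : 1 ≤ d)
    (ρ : Fin q → ℝ) (ν : Fin q × Fin q → ℝ)
    (hρ0 : ∀ i, 0 ≤ ρ i) (hρ1 : ∑ i, ρ i = 1)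
    (hν0 : ∀ a, 0 ≤ ν a) (hν1 : ∑ a, ν a = 1)
    (hsym : ∀ i j, ν (i, j) = ν (j, i)) (hmarg : ∀ i, ∑ j, ν (i, j) = ρ i)
    (habs : ∀ i j, ρ i * ρ j = 0 → ν (i, j) = 0) :
    ∃ k : ℕ → Fin q → ℕ, ∃ m : ℕ → Fin q × Fin q → ℕ,
      (∀ n, Even (n * d) → 0 < n →
        (∑ i, k n i = n) ∧ (∀ i j, m n (i, j) = m n (j, i)) ∧ (∀ i, Even (m n (i, i))) ∧
        (∀ i, ∑ j, m n (i, j) = d * k n i)) ∧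
      (∀ i, Tendsto (fun n => (k n i : ℝ) / n)
        (atTop ⊓ Filter.principal {n : ℕ | Even (n * d)}) (nhds (ρ i))) ∧
      (∀ a, Tendsto (fun n => (m n a : ℝ) / (n * d))
        (atTop ⊓ Filter.principal {n : ℕ | Even (n * d)}) (nhds (ν a))) ∧
      Tendsto (fun n =>
          (∑ i, ((k n i : ℝ) / n) * Real.log (((k n i : ℝ) / n) / μ i)) +
            (d : ℝ) / 2 * ∑ i, ∑ j, ((m n (i, j) : ℝ) / (n * d)) *
              Real.log (((m n (i, j) : ℝ) / (n * d)) /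
                (((k n i : ℝ) / n) * ((k n j : ℝ) / n))))
        (atTop ⊓ Filter.principal {n : ℕ | Even (n * d)})
        (nhds ((∑ i, ρ i * Real.log (ρ i / μ i)) +
          (d : ℝ) / 2 * ∑ i, ∑ j, ν (i, j) * Real.log (ν (i, j) / (ρ i * ρ j)))) :=
  stmt17_general μ hμ0 d hd ρ ν hρ0 hρ1 hν0 hν1 hsym hmarg habs
end
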